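/- Let g and h be binary morphisms A* → Σ*, and let g be marked. Let (c,d) and (c',d') be distinct elements of the coincidence set I(g,h) = {(u,v) : g(u) = h(v)}, and suppose that c and c' are not prefix-comparable. Let u = c ∧ c' be the longest common prefix of c and c', and v = d ∧ d' the longest common prefix of d and d'. Then g(u) = h(v)·z_h. -/
import Mathlib


/-- The two-letter alphabet `A = {a, b}`. -/
inductive Ltr : Type
  | a : Ltr
  | b : Ltr
  deriving DecidableEq

/-- Apply a morphism (given by the images of the letters) to a word. -/
def mapp {α σ : Type*} (g : α → List σ) (w : List α) : List σ :=
  (w.map g).flatten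

/-- The `n`-th power `tⁿ` of a word `t`. -/
def npow {σ : Type*} (t : List σ) (n : ℕ) : List σ :=
  (List.replicate n t).flatten

/-- A binary morphism is periodic if all images of letters are powers of a common word. -/
def Periodic {σ : Type*} (g : Ltr → List σ) : Prop :=
  ∃ t : List σ, ∀ x : Ltr, ∃ n : ℕ, g x = npow t n

/-- The equality set `E(g,h)`. -/
def EqSet {σ : Type*} (g h : Ltr → List σ) : Set (List Ltr) :=
  {u | mapp g u = mapp h u}

/-- `u` is a minimal element of `E(g,h)`: nonempty, in `E(g,h)`, and not a product of two
nonempty elements of `E(g,h)`. -/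
def MinEl {σ : Type*} (g h : Ltr → List σ) (u : List Ltr) : Prop :=
  u ≠ [] ∧ u ∈ EqSet g h ∧
    ∀ v w : List Ltr, v ≠ [] → w ≠ [] → v ∈ EqSet g h → w ∈ EqSet g h → u ≠ v ++ w

/-- The submonoid of the free monoid generated by a set `S` of words. -/
def gen {α : Type*} (S : Set (List α)) : Set (List α) :=
  {u | ∃ l : List (List α), (∀ v ∈ l, v ∈ S) ∧ u = l.flatten}

/-- A binary morphism is marked if the images of the two letters are nonempty and
begin with different letters. -/
def Marked {σ : Type*} (g : Ltr → List σ) : Prop :=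
  g Ltr.a ≠ [] ∧ g Ltr.b ≠ [] ∧ (g Ltr.a).head? ≠ (g Ltr.b).head?

open Classical in
/-- Longest common prefix of two words. -/
noncomputable def lcp {σ : Type*} : List σ → List σ → List σ
  | x :: xs, y :: ys => if x = y then x :: lcp xs ys else []
  | _, _ => []

/-- `z_h`: the longest common prefix of `h(ab)` and `h(ba)`. -/
noncomputable def zh {σ : Type*} (h : Ltr → List σ) : List σ :=
  lcp (h Ltr.a ++ h Ltr.b) (h Ltr.b ++ h Ltr.a)

/-- `z̄_h`: the longest common suffix of `h(ab)` and `h(ba)`. -/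
noncomputable def zbar {σ : Type*} (h : Ltr → List σ) : List σ :=
  (lcp (h Ltr.a ++ h Ltr.b).reverse ((h Ltr.b ++ h Ltr.a).reverse)).reverse

/-- Componentwise concatenation in `Δ* × Δ*`. -/
def pprod {α : Type*} (p q : List α × List α) : List α × List α :=
  (p.1 ++ q.1, p.2 ++ q.2)

/-- The coincidence set `I(g,h) = {(u,v) | g(u) = h(v)}`. -/
def CoinSet {α σ : Type*} (g h : α → List σ) : Set (List α × List α) :=
  {p | mapp g p.1 = mapp h p.2}

/-- Minimal elements of the coincidence set: elements other than `(ε,ε)` that are not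
a product of two elements of `I(g,h) \ {(ε,ε)}`. -/
def MinCoin {α σ : Type*} (g h : α → List σ) (p : List α × List α) : Prop :=
  p ≠ ([], []) ∧ p ∈ CoinSet g h ∧
    ¬ ∃ q r : List α × List α, q ≠ ([], []) ∧ r ≠ ([], []) ∧
      q ∈ CoinSet g h ∧ r ∈ CoinSet g h ∧ p = pprod q r

/-- `(e,f)` is a block of `(g,h)`: nonempty words with `z_h·g(e) = h(f)·z_h`, minimal
with this property. -/
def MinBlock {σ : Type*} (g h : Ltr → List σ) (e f : List Ltr) : Prop :=
  e ≠ [] ∧ f ≠ [] ∧ zh h ++ mapp g e = mapp h f ++ zh h ∧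
    ∀ u v : List Ltr, u <+: e → v <+: f →
      zh h ++ mapp g u = mapp h v ++ zh h → (u = [] ∧ v = []) ∨ (u = e ∧ v = f)

/-- `e` is a nonempty word with `z_h·g(e) = h(e)·z_h`, minimal with this property. -/
def MinEqBlock {σ : Type*} (g h : Ltr → List σ) (e : List Ltr) : Prop :=
  e ≠ [] ∧ zh h ++ mapp g e = mapp h e ++ zh h ∧
    ∀ e₁ : List Ltr, e₁ <+: e → zh h ++ mapp g e₁ = mapp h e₁ ++ zh h →
      e₁ = [] ∨ e₁ = e

/-- The binary morphism sending `a ↦ x` and `b ↦ y`. -/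
def two {σ : Type*} (x y : List σ) : Ltr → List σ
  | Ltr.a => x
  | Ltr.b => y

/-- A counterexample: the minimal generating set of `E(g,h)` has at least two elements,
`g` is marked, `h` is not marked, `|g(a)| > |h(a)|` and `|g(b)| < |h(b)|`. -/
def Counterexample {σ : Type*} (g h : Ltr → List σ) : Prop :=
  (∃ α β : List Ltr, MinEl g h α ∧ MinEl g h β ∧ α ≠ β) ∧
  Marked g ∧ ¬ Marked h ∧
  (h Ltr.a).length < (g Ltr.a).length ∧ (g Ltr.b).length < (h Ltr.b).length

namespace Stmt8Aux

variable {α : Type*}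

open Classical in
theorem lcp_cons_cons (x y : α) (xs ys : List α) :
    lcp (x::xs) (y::ys) = if x = y then x :: lcp xs ys else [] := by
  rw [lcp]

theorem lcp_cons_same (x : α) (xs ys : List α) :
    lcp (x::xs) (x::ys) = x :: lcp xs ys := by
  rw [lcp_cons_cons]; exact if_pos rfl

theorem lcp_cons_ne {x y : α} (h : x ≠ y) (xs ys : List α) :
    lcp (x::xs) (y::ys) = [] := by
  rw [lcp_cons_cons]; exact if_neg h

theorem lcp_nil_left (v : List α) : lcp ([] : List α) v = [] := by
  cases v <;> simp [lcp]

theorem lcp_nil_right (u : List α) : lcp u ([] : List α) = [] := by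
  cases u <;> simp [lcp]

theorem lcp_comm (u : List α) : ∀ v : List α, lcp u v = lcp v u := by
  induction u with
  | nil => intro v; rw [lcp_nil_left, lcp_nil_right]
  | cons x xs ih =>
    intro v
    cases v with
    | nil => rw [lcp_nil_left, lcp_nil_right]
    | cons y ys =>
      rcases eq_or_ne x y with rfl | hxy
      · rw [lcp_cons_same, lcp_cons_same, ih]
      · rw [lcp_cons_ne hxy, lcp_cons_ne hxy.symm]

theorem lcp_append_append (p : List α) : ∀ s t : List α,
    lcp (p ++ s) (p ++ t) = p ++ lcp s t := by
  induction p with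
  | nil => intro s t; simp
  | cons x xs ih =>
    intro s t
    show lcp (x :: (xs ++ s)) (x :: (xs ++ t)) = _
    rw [lcp_cons_same, ih]
    rfl

theorem lcp_head_ne {u v : List α} (h : u.head? ≠ v.head?) : lcp u v = [] := by
  cases u with
  | nil => exact lcp_nil_left v
  | cons x xs =>
    cases v with
    | nil => exact lcp_nil_right _
    | cons y ys =>
      have hxy : x ≠ y := by simpa using h
      exact lcp_cons_ne hxy xs ys

theorem lcp_incomp : ∀ p q s t : List α, ¬(p <+: q ∨ q <+: p) →
    lcp (p ++ s) (q ++ t) = lcp p q := by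
  intro p
  induction p with
  | nil => intro q s t h; exact absurd (Or.inl (List.nil_prefix)) h
  | cons x xs ih =>
    intro q s t h
    cases q with
    | nil => exact absurd (Or.inr (List.nil_prefix)) h
    | cons y ys =>
      rcases eq_or_ne x y with rfl | hxy
      · have h' : ¬(xs <+: ys ∨ ys <+: xs) := by
          intro hc
          exact h (hc.imp (fun h1 => (List.cons_prefix_cons).2 ⟨rfl, h1⟩)
            (fun h1 => (List.cons_prefix_cons).2 ⟨rfl, h1⟩))
        show lcp (x :: (xs ++ s)) (x :: (ys ++ t)) = _
        rw [lcp_cons_same, lcp_cons_same, ih ys s t h']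
      · show lcp (x :: (xs ++ s)) (y :: (ys ++ t)) = _
        rw [lcp_cons_ne hxy, lcp_cons_ne hxy]

theorem lcp_spec : ∀ c c' : List α, (c <+: c' ∨ c' <+: c) ∨
    ∃ x y s t, x ≠ y ∧ c = lcp c c' ++ x :: s ∧ c' = lcp c c' ++ y :: t := by
  intro c
  induction c with
  | nil => intro c'; exact Or.inl (Or.inl (List.nil_prefix))
  | cons x xs ih =>
    intro c'
    cases c' with
    | nil => exact Or.inl (Or.inr (List.nil_prefix))
    | cons y ys =>
      rcases eq_or_ne x y with rfl | hxy
      · rcases ih ys with hcomp | ⟨x', y', s, t, hne, h1, h2⟩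
        · exact Or.inl (hcomp.imp (fun h => (List.cons_prefix_cons).2 ⟨rfl, h⟩)
            (fun h => (List.cons_prefix_cons).2 ⟨rfl, h⟩))
        · refine Or.inr ⟨x', y', s, t, hne, ?_, ?_⟩
          · rw [lcp_cons_same]; rw [List.cons_append, ← h1]
          · rw [lcp_cons_same]; rw [List.cons_append, ← h2]
      · refine Or.inr ⟨x, y, xs, ys, hxy, ?_, ?_⟩
        · rw [lcp_cons_ne hxy]; rfl
        · rw [lcp_cons_ne hxy]; rfl

theorem head?_append_of_ne_nil {p : List α} (hp : p ≠ []) (s : List α) :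
    (p ++ s).head? = p.head? := by
  cases p with
  | nil => exact absurd rfl hp
  | cons x xs => rfl

theorem prefix_head? {p q : List α} (h : p <+: q) (hp : p ≠ []) : q.head? = p.head? := by
  obtain ⟨r, rfl⟩ := h
  exact head?_append_of_ne_nil hp r

theorem incomp_of_head_ne {p q : List α} (hp : p ≠ []) (hq : q ≠ [])
    (hh : p.head? ≠ q.head?) : ¬(p <+: q ∨ q <+: p) := by
  rintro (h | h)
  · exact hh (prefix_head? h hp).symm
  · exact hh (prefix_head? h hq)

/-- membership in `{x,y}*` -/
def IG (x y : List α) (u : List α) : Prop :=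
  ∃ l : List (List α), (∀ w ∈ l, w = x ∨ w = y) ∧ u = l.flatten

theorem IG_nil (x y : List α) : IG x y [] := ⟨[], by simp⟩

theorem IG_cons_left {x y u : List α} (h : IG x y u) : IG x y (x ++ u) := by
  obtain ⟨l, hl, rfl⟩ := h
  refine ⟨x :: l, ?_, by simp⟩
  intro w hw
  rcases List.mem_cons.mp hw with rfl | hw'
  · exact Or.inl rfl
  · exact hl w hw'

theorem IG_cons_right {x y u : List α} (h : IG x y u) : IG x y (y ++ u) := by
  obtain ⟨l, hl, rfl⟩ := h
  refine ⟨y :: l, ?_, by simp⟩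
  intro w hw
  rcases List.mem_cons.mp hw with rfl | hw'
  · exact Or.inr rfl
  · exact hl w hw'

theorem IG_swap {x y u : List α} (h : IG x y u) : IG y x u := by
  obtain ⟨l, hl, rfl⟩ := h
  exact ⟨l, fun w hw => (hl w hw).symm, rfl⟩

theorem IG_dest {x y u : List α} (h : IG x y u) :
    u = [] ∨ (∃ u', IG x y u' ∧ u = x ++ u') ∨ (∃ u', IG x y u' ∧ u = y ++ u') := by
  obtain ⟨l, hl, rfl⟩ := h
  cases l with
  | nil => exact Or.inl rfl
  | cons w l' =>
    have htail : IG x y l'.flatten := ⟨l', fun w hw => hl w (by simp [hw]), rfl⟩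
    rcases hl w (by simp) with rfl | rfl
    · exact Or.inr (Or.inl ⟨l'.flatten, htail, by simp⟩)
    · exact Or.inr (Or.inr ⟨l'.flatten, htail, by simp⟩)

theorem IG_reduce {x t u : List α} (h : IG x (x ++ t) u) : IG x t u := by
  obtain ⟨l, hl, rfl⟩ := h
  induction l with
  | nil => exact IG_nil x t
  | cons w l' ih =>
    have htail : IG x t l'.flatten := ih (fun w hw => hl w (by simp [hw]))
    rcases hl w (by simp) with rfl | rfl
    · simpa using IG_cons_left htail
    · show IG x t ((x ++ t) ++ l'.flatten)
      rw [List.append_assoc]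
      exact IG_cons_left (IG_cons_right htail)

theorem IG_nilx {y u : List α} (h : IG ([] : List α) y u) : IG y y u := by
  obtain ⟨l, hl, rfl⟩ := h
  induction l with
  | nil => exact IG_nil y y
  | cons w l' ih =>
    have htail : IG y y l'.flatten := ih (fun w hw => hl w (by simp [hw]))
    rcases hl w (by simp) with rfl | rfl
    · simpa using htail
    · exact IG_cons_left htail

theorem IG_self_pow {y u : List α} (h : IG y y u) : ∃ n, u = npow y n := by
  obtain ⟨l, hl, rfl⟩ := h
  refine ⟨l.length, ?_⟩
  induction l with
  | nil => rfl
  | cons w l' ih =>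
    have hw : w = y := (hl w (by simp)).elim id id
    subst hw
    show w ++ l'.flatten = (List.replicate (l'.length + 1) w).flatten
    rw [List.replicate_succ, List.flatten_cons, ih (fun w hw => hl w (by simp [hw]))]
    rfl

theorem npow_comparable (y : List α) (m n : ℕ) :
    npow y m <+: npow y n ∨ npow y n <+: npow y m := by
  have key : ∀ a b : ℕ, a ≤ b → npow y a <+: npow y b := by
    intro a b hab
    refine ⟨npow y (b - a), ?_⟩
    show (List.replicate a y).flatten ++ (List.replicate (b-a) y).flatten = _
    rw [← List.flatten_append, ← List.replicate_add, Nat.add_sub_cancel' hab]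
    rfl
  rcases le_total m n with h | h
  · exact Or.inl (key m n h)
  · exact Or.inr (key n m h)

theorem IG_self_comp {y u v : List α} (hu : IG y y u) (hv : IG y y v) :
    u <+: v ∨ v <+: u := by
  obtain ⟨m, rfl⟩ := IG_self_pow hu
  obtain ⟨n, rfl⟩ := IG_self_pow hv
  exact npow_comparable y m n

/-- The key combinatorial lemma. -/
theorem keyL : ∀ n : ℕ, ∀ x y u v : List α, x.length + y.length ≤ n →
    IG x y u → IG x y v → ¬((x ++ u) <+: (y ++ v) ∨ (y ++ v) <+: (x ++ u)) →
    lcp (x ++ u) (y ++ v) = lcp (x ++ y) (y ++ x) := by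
  intro n
  induction n with
  | zero =>
    intro x y u v hlen hu hv hinc
    have hx : x = [] := List.eq_nil_of_length_eq_zero (by omega)
    have hy : y = [] := List.eq_nil_of_length_eq_zero (by omega)
    subst hx; subst hy
    simp only [List.nil_append] at hinc
    exact absurd (IG_self_comp (IG_nilx hu) (IG_nilx hv)) hinc
  | succ n ih =>
    intro x y u v hlen hu hv hinc
    rcases eq_or_ne x [] with rfl | hx
    · have hu' := IG_nilx hu
      have hv' : IG y y (y ++ v) := IG_cons_left (IG_nilx hv)
      simp only [List.nil_append] at hinc
      exact absurd (IG_self_comp hu' hv') hinc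
    rcases eq_or_ne y [] with rfl | hy
    · have hu' : IG x x (x ++ u) := IG_cons_left (IG_nilx (IG_swap hu))
      have hv' := IG_nilx (IG_swap hv)
      simp only [List.nil_append] at hinc
      exact absurd (IG_self_comp hu' hv') hinc
    by_cases hxy : x <+: y
    · obtain ⟨t, rfl⟩ := hxy
      rcases eq_or_ne t [] with rfl | ht
      · simp only [List.append_nil] at hu hv hinc ⊢
        have hu' : IG x x (x ++ u) := IG_cons_left hu
        have hv' : IG x x (x ++ v) := IG_cons_left hv
        exact absurd (IG_self_comp hu' hv') hinc
      · have hune : u ≠ [] := by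
          rintro rfl
          exact hinc (Or.inl ⟨t ++ v, by simp⟩)
        obtain ⟨u₂, hu₂, hueq⟩ : ∃ u₂, IG x t u₂ ∧ u = x ++ u₂ := by
          rcases IG_dest hu with rfl | ⟨u', hu', rfl⟩ | ⟨u', hu', rfl⟩
          · exact absurd rfl hune
          · exact ⟨u', IG_reduce hu', rfl⟩
          · exact ⟨t ++ u', IG_cons_right (IG_reduce hu'), by simp⟩
        have hv₂ : IG x t v := IG_reduce hv
        subst hueq
        have hinc' : ¬((x ++ u₂) <+: (t ++ v) ∨ (t ++ v) <+: (x ++ u₂)) := by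
          intro hc
          apply hinc
          rcases hc with h' | h'
          · exact Or.inl (by rw [List.append_assoc]; exact (List.prefix_append_right_inj x).2 h')
          · exact Or.inr (by rw [List.append_assoc]; exact (List.prefix_append_right_inj x).2 h')
        have hxlen : 0 < x.length := List.length_pos_iff.mpr hx
        have hlen' : x.length + t.length ≤ n := by
          simp only [List.length_append] at hlen; omega
        have key := ih x t u₂ v hlen' hu₂ hv₂ hinc'
        calc lcp (x ++ (x ++ u₂)) ((x ++ t) ++ v)
            = lcp (x ++ (x ++ u₂)) (x ++ (t ++ v)) := by rw [List.append_assoc]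
          _ = x ++ lcp (x ++ u₂) (t ++ v) := lcp_append_append x _ _
          _ = x ++ lcp (x ++ t) (t ++ x) := by rw [key]
          _ = lcp (x ++ (x ++ t)) (x ++ (t ++ x)) := (lcp_append_append x _ _).symm
          _ = lcp (x ++ (x ++ t)) ((x ++ t) ++ x) := by rw [List.append_assoc]
    by_cases hyx : y <+: x
    · obtain ⟨t, rfl⟩ := hyx
      rcases eq_or_ne t [] with rfl | ht
      · simp only [List.append_nil] at hu hv hinc ⊢
        exact absurd (IG_self_comp (IG_cons_left hu) (IG_cons_left hv)) hinc
      · have hvne : v ≠ [] := by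
          rintro rfl
          exact hinc (Or.inr ⟨t ++ u, by simp⟩)
        obtain ⟨v₂, hv₂, hveq⟩ : ∃ v₂, IG y t v₂ ∧ v = y ++ v₂ := by
          rcases IG_dest hv with rfl | ⟨v', hv', rfl⟩ | ⟨v', hv', rfl⟩
          · exact absurd rfl hvne
          · exact ⟨t ++ v', IG_cons_right (IG_reduce (IG_swap hv')), by simp⟩
          · exact ⟨v', IG_reduce (IG_swap hv'), rfl⟩
        have hu₂ : IG y t u := IG_reduce (IG_swap hu)
        subst hveq
        have hinc' : ¬((y ++ v₂) <+: (t ++ u) ∨ (t ++ u) <+: (y ++ v₂)) := by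
          intro hc
          apply hinc
          rcases hc with h' | h'
          · exact Or.inr (by rw [List.append_assoc]; exact (List.prefix_append_right_inj y).2 h')
          · exact Or.inl (by rw [List.append_assoc]; exact (List.prefix_append_right_inj y).2 h')
        have hylen : 0 < y.length := List.length_pos_iff.mpr hy
        have hlen' : y.length + t.length ≤ n := by
          simp only [List.length_append] at hlen; omega
        have key := ih y t v₂ u hlen' hv₂ hu₂ hinc'
        calc lcp ((y ++ t) ++ u) (y ++ (y ++ v₂))
            = lcp (y ++ (t ++ u)) (y ++ (y ++ v₂)) := by rw [List.append_assoc]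
          _ = y ++ lcp (t ++ u) (y ++ v₂) := lcp_append_append y _ _
          _ = y ++ lcp (y ++ v₂) (t ++ u) := by rw [lcp_comm]
          _ = y ++ lcp (y ++ t) (t ++ y) := by rw [key]
          _ = y ++ lcp (t ++ y) (y ++ t) := by rw [lcp_comm]
          _ = lcp (y ++ (t ++ y)) (y ++ (y ++ t)) := (lcp_append_append y _ _).symm
          _ = lcp ((y ++ t) ++ y) (y ++ (y ++ t)) := by rw [List.append_assoc]
    · have h1 := lcp_incomp x y u v (fun hc => (hc.elim hxy hyx))
      have h2 := lcp_incomp x y y x (fun hc => (hc.elim hxy hyx))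
      rw [h1, h2]

end Stmt8Aux

namespace Stmt8Aux

theorem mapp_append {α σ : Type*} (g : α → List σ) (u v : List α) :
    mapp g (u ++ v) = mapp g u ++ mapp g v := by
  simp [mapp]

theorem mapp_cons {α σ : Type*} (g : α → List σ) (x : α) (s : List α) :
    mapp g (x :: s) = g x ++ mapp g s := by
  simp [mapp]

theorem marked_facts {σ : Type*} (g : Ltr → List σ) (hg : Marked g) {x y : Ltr}
    (hxy : x ≠ y) : g x ≠ [] ∧ g y ≠ [] ∧ (g x).head? ≠ (g y).head? := by
  obtain ⟨ha, hb, hab⟩ := hg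
  cases x <;> cases y
  · exact absurd rfl hxy
  · exact ⟨ha, hb, hab⟩
  · exact ⟨hb, ha, hab.symm⟩
  · exact absurd rfl hxy

theorem IG_mapp {σ : Type*} (h : Ltr → List σ) {x y : Ltr} (hxy : x ≠ y) (w : List Ltr) :
    IG (h x) (h y) (mapp h w) := by
  refine ⟨w.map h, ?_, rfl⟩
  intro w' hw'
  obtain ⟨e, _, rfl⟩ := List.mem_map.mp hw'
  cases e <;> cases x <;> cases y <;> simp_all

theorem zh_eq {σ : Type*} (h : Ltr → List σ) {x y : Ltr} (hxy : x ≠ y) :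
    lcp (h x ++ h y) (h y ++ h x) = zh h := by
  cases x <;> cases y
  · exact absurd rfl hxy
  · rfl
  · exact lcp_comm _ _
  · exact absurd rfl hxy

end Stmt8Aux

open Stmt8Aux in
/-- If `(c,d)` and `(c',d')` are distinct elements of `I(g,h)` with `c`, `c'`
not prefix-comparable, then `g(c ∧ c') = h(d ∧ d')·z_h` (`g` marked). -/
theorem stmt_8 {σ : Type*} (g h : Ltr → List σ) (hg : Marked g)
    (c d c' d' : List Ltr)
    (h1 : (c, d) ∈ CoinSet g h) (h2 : (c', d') ∈ CoinSet g h)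
    (hne : (c, d) ≠ (c', d'))
    (hinc : ¬ (c <+: c' ∨ c' <+: c)) :
    mapp g (lcp c c') = mapp h (lcp d d') ++ zh h := by
  have h1' : mapp g c = mapp h d := h1
  have h2' : mapp g c' = mapp h d' := h2
  rcases lcp_spec c c' with hcomp | ⟨x, y, s, t, hxy, hc, hc'⟩
  · exact absurd hcomp hinc
  obtain ⟨hgx, hgy, hgh⟩ := marked_facts g hg hxy
  have hAh : (g x ++ mapp g s).head? ≠ (g y ++ mapp g t).head? := by
    rw [head?_append_of_ne_nil hgx, head?_append_of_ne_nil hgy]; exact hgh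
  have hABinc : ¬(g x ++ mapp g s <+: g y ++ mapp g t ∨
      g y ++ mapp g t <+: g x ++ mapp g s) :=
    incomp_of_head_ne (by simp [hgx]) (by simp [hgy]) hAh
  have hgc : mapp g c = mapp g (lcp c c') ++ (g x ++ mapp g s) := by
    conv_lhs => rw [hc, mapp_append, mapp_cons]
  have hgc' : mapp g c' = mapp g (lcp c c') ++ (g y ++ mapp g t) := by
    conv_lhs => rw [hc', mapp_append, mapp_cons]
  have hGinc : ¬(mapp g c <+: mapp g c' ∨ mapp g c' <+: mapp g c) := by
    rw [hgc, hgc']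
    intro hcon
    exact hABinc (hcon.imp (fun h' => (List.prefix_append_right_inj _).1 h')
      (fun h' => (List.prefix_append_right_inj _).1 h'))
  have hHinc : ¬(mapp h d <+: mapp h d' ∨ mapp h d' <+: mapp h d) := by
    rw [← h1', ← h2']; exact hGinc
  rcases lcp_spec d d' with hcomp2 | ⟨x', y', s', t', hxy', hd, hd'⟩
  · exfalso
    apply hHinc
    rcases hcomp2 with ⟨r, rfl⟩ | ⟨r, rfl⟩
    · exact Or.inl ⟨mapp h r, (mapp_append h d r).symm⟩
    · exact Or.inr ⟨mapp h r, (mapp_append h d' r).symm⟩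
  have hhd : mapp h d = mapp h (lcp d d') ++ (h x' ++ mapp h s') := by
    conv_lhs => rw [hd, mapp_append, mapp_cons]
  have hhd' : mapp h d' = mapp h (lcp d d') ++ (h y' ++ mapp h t') := by
    conv_lhs => rw [hd', mapp_append, mapp_cons]
  have hA'inc : ¬(h x' ++ mapp h s' <+: h y' ++ mapp h t' ∨
      h y' ++ mapp h t' <+: h x' ++ mapp h s') := by
    intro hcon
    apply hHinc
    rw [hhd, hhd']
    exact hcon.imp (fun h' => (List.prefix_append_right_inj _).2 h')
      (fun h' => (List.prefix_append_right_inj _).2 h')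
  have hkey := keyL ((h x').length + (h y').length) (h x') (h y') (mapp h s') (mapp h t')
    le_rfl (IG_mapp h hxy' s') (IG_mapp h hxy' t') hA'inc
  have lhs : lcp (mapp g c) (mapp g c') = mapp g (lcp c c') := by
    rw [hgc, hgc', lcp_append_append, lcp_head_ne hAh, List.append_nil]
  have rhs : lcp (mapp g c) (mapp g c') = mapp h (lcp d d') ++ zh h := by
    rw [h1', h2', hhd, hhd', lcp_append_append, hkey, zh_eq h hxy']
  rw [← lhs, rhs]
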